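/- Let u₁, u₂ : ℝ → ℝ be differentiable functions. On the open set of points (q₁, q₂, p₁, p₂) ∈ ℝ⁴ with u₁(q₁) ≠ u₂(q₂), define H(q,p) = (p₁² + p₂²) / (2 (u₁(q₁) - u₂(q₂))) and f(q,p) = (u₂(q₂) p₁² + u₁(q₁) p₂²) / (2 (u₁(q₁) - u₂(q₂))). Then the Poisson bracket of H and f vanishes: at every point with u₁(q₁) ≠ u₂(q₂), (∂H/∂p₁)(∂f/∂q₁) + (∂H/∂p₂)(∂f/∂q₂) - (∂H/∂q₁)(∂f/∂p₁) - (∂H/∂q₂)(∂f/∂p₂) = 0, where each partial derivative is the derivative of the corresponding one-variable slice. (The kinetic-energy Hamiltonian of a Liouville metric ds² = (u₁ - u₂)(dq₁² + dq₂²) has f as a first integral.) -/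

import Mathlib

/-!
Away from `u₁(q₁) = u₂(q₂)` one has `f = u₂(q₂) H + p₂²/2 = u₁(q₁) H - p₁²/2`. Using the first
form in the `(q₁, p₁)` directions and the second in the `(q₂, p₂)` directions, every partial
derivative of `f` is a constant multiple of the same partial derivative of `H`: `u₂(q₂)` for the
first pair and `u₁(q₁)` for the second. The two terms of the bracket belonging to each pair then
cancel, and no derivative of `u₁` or `u₂` ever has to be computed.
-/

/-- The kinetic-energy Hamiltonian of the Liouville metric
`ds² = (u₁(q₁) - u₂(q₂))(dq₁² + dq₂²)`. -/
noncomputable def liouvilleH (u₁ u₂ : ℝ → ℝ) (q₁ q₂ p₁ p₂ : ℝ) : ℝ :=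
  (p₁ ^ 2 + p₂ ^ 2) / (2 * (u₁ q₁ - u₂ q₂))

/-- The first integral `f` of the Liouville Hamiltonian. -/
noncomputable def liouvilleF (u₁ u₂ : ℝ → ℝ) (q₁ q₂ p₁ p₂ : ℝ) : ℝ :=
  (u₂ q₂ * p₁ ^ 2 + u₁ q₁ * p₂ ^ 2) / (2 * (u₁ q₁ - u₂ q₂))

open Filter Topology

theorem deriv_eq_const_mul_of_eventuallyEq {𝕜 : Type*} [NontriviallyNormedField 𝕜]
    {f g : 𝕜 → 𝕜} {x c d : 𝕜} (h : f =ᶠ[𝓝 x] fun s => c * g s + d) :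
    deriv f x = c * deriv g x := by
  rw [h.deriv_eq, deriv_add_const, deriv_const_mul_field]

section Liouville

variable {u₁ u₂ : ℝ → ℝ} {q₁ q₂ : ℝ}

theorem liouvilleF_eq_mul_liouvilleH_add (hne : u₁ q₁ ≠ u₂ q₂) (p₁ p₂ : ℝ) :
    liouvilleF u₁ u₂ q₁ q₂ p₁ p₂ = u₂ q₂ * liouvilleH u₁ u₂ q₁ q₂ p₁ p₂ + p₂ ^ 2 / 2 := by
  have : u₁ q₁ - u₂ q₂ ≠ 0 := sub_ne_zero.mpr hne
  unfold liouvilleF liouvilleH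
  field_simp
  ring

theorem liouvilleF_eq_mul_liouvilleH_sub (hne : u₁ q₁ ≠ u₂ q₂) (p₁ p₂ : ℝ) :
    liouvilleF u₁ u₂ q₁ q₂ p₁ p₂ = u₁ q₁ * liouvilleH u₁ u₂ q₁ q₂ p₁ p₂ - p₁ ^ 2 / 2 := by
  have : u₁ q₁ - u₂ q₂ ≠ 0 := sub_ne_zero.mpr hne
  unfold liouvilleF liouvilleH
  field_simp
  ring

variable (p₁ p₂ : ℝ)

theorem deriv_liouvilleF_q₁ (hne : u₁ q₁ ≠ u₂ q₂) (hu₁ : ContinuousAt u₁ q₁) :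
    deriv (fun s => liouvilleF u₁ u₂ s q₂ p₁ p₂) q₁ =
      u₂ q₂ * deriv (fun s => liouvilleH u₁ u₂ s q₂ p₁ p₂) q₁ :=
  deriv_eq_const_mul_of_eventuallyEq <| (hu₁.eventually_ne hne).mono
    fun _ hs => liouvilleF_eq_mul_liouvilleH_add hs p₁ p₂

theorem deriv_liouvilleF_q₂ (hne : u₁ q₁ ≠ u₂ q₂) (hu₂ : ContinuousAt u₂ q₂) :
    deriv (fun s => liouvilleF u₁ u₂ q₁ s p₁ p₂) q₂ =
      u₁ q₁ * deriv (fun s => liouvilleH u₁ u₂ q₁ s p₁ p₂) q₂ :=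
  deriv_eq_const_mul_of_eventuallyEq <| (hu₂.eventually_ne hne.symm).mono
    fun _ hs => (liouvilleF_eq_mul_liouvilleH_sub (Ne.symm hs) p₁ p₂).trans (sub_eq_add_neg _ _)

theorem deriv_liouvilleF_p₁ (hne : u₁ q₁ ≠ u₂ q₂) :
    deriv (fun s => liouvilleF u₁ u₂ q₁ q₂ s p₂) p₁ =
      u₂ q₂ * deriv (fun s => liouvilleH u₁ u₂ q₁ q₂ s p₂) p₁ :=
  deriv_eq_const_mul_of_eventuallyEq <|
    .of_forall fun s => liouvilleF_eq_mul_liouvilleH_add hne s p₂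

theorem deriv_liouvilleF_p₂ (hne : u₁ q₁ ≠ u₂ q₂) :
    deriv (fun s => liouvilleF u₁ u₂ q₁ q₂ p₁ s) p₂ =
      u₁ q₁ * deriv (fun s => liouvilleH u₁ u₂ q₁ q₂ p₁ s) p₂ :=
  deriv_eq_const_mul_of_eventuallyEq <|
    .of_forall fun s => (liouvilleF_eq_mul_liouvilleH_sub hne p₁ s).trans (sub_eq_add_neg _ _)

end Liouville

/-- The canonical Poisson bracket of the Liouville Hamiltonian `H` and the function `f`
vanishes wherever `u₁(q₁) ≠ u₂(q₂)`: `f` is a first integral of `H`. -/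
theorem liouville_first_integral (u₁ u₂ : ℝ → ℝ)
    (hu₁ : Differentiable ℝ u₁) (hu₂ : Differentiable ℝ u₂)
    (q₁ q₂ p₁ p₂ : ℝ) (hne : u₁ q₁ ≠ u₂ q₂) :
    deriv (fun s => liouvilleH u₁ u₂ q₁ q₂ s p₂) p₁ *
        deriv (fun s => liouvilleF u₁ u₂ s q₂ p₁ p₂) q₁
      + deriv (fun s => liouvilleH u₁ u₂ q₁ q₂ p₁ s) p₂ *
        deriv (fun s => liouvilleF u₁ u₂ q₁ s p₁ p₂) q₂
      - deriv (fun s => liouvilleH u₁ u₂ s q₂ p₁ p₂) q₁ *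
        deriv (fun s => liouvilleF u₁ u₂ q₁ q₂ s p₂) p₁
      - deriv (fun s => liouvilleH u₁ u₂ q₁ s p₁ p₂) q₂ *
        deriv (fun s => liouvilleF u₁ u₂ q₁ q₂ p₁ s) p₂ = 0 := by
  rw [deriv_liouvilleF_q₁ p₁ p₂ hne (hu₁ q₁).continuousAt,
    deriv_liouvilleF_q₂ p₁ p₂ hne (hu₂ q₂).continuousAt,
    deriv_liouvilleF_p₁ p₁ p₂ hne, deriv_liouvilleF_p₂ p₁ p₂ hne]
  ring
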